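/- Let A, B be two cycle growth histories and n ≥ 4. If ν_A(n) is not an edge of B_{n-1}, then n is a vertex of the pedigree graph G_n^{AB}, and there is exactly one edge 'from A to B' incident to n: it is a type-1 edge if every node in the segment of B between ν_A^+(n) and ν_A^-(n) is larger than both of these nodes, and a type-2 edge otherwise. -/

import Mathlib

/-- A growth history of a cycle: `next m` is the successor function ("positive direction")
of the cycle `A_m` with node set `{1,…,m}`; starting from the triangle on `{1,2,3}`
(oriented so that from node 1, node 2 comes before node 3), at each time `n ≥ 4` the node `n`
is inserted into (subdivides) the cycle-edge `{nuPlus n, nuMinus n}` of `A_{n-1}`, where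
`nuPlus n` (resp. `nuMinus n`) is the neighbor of `n` in `A_n` in positive (resp. negative)
direction.  `prev m` is the predecessor function (walking in negative direction). -/
structure GrowthHistory where
  next : ℕ → ℕ → ℕ
  prev : ℕ → ℕ → ℕ
  nuPlus : ℕ → ℕ
  nuMinus : ℕ → ℕ
  base1 : next 3 1 = 2
  base2 : next 3 2 = 3
  base3 : next 3 3 = 1
  nu2p : nuPlus 2 = 1
  nu2m : nuMinus 2 = 1
  nu3p : nuPlus 3 = 1
  nu3m : nuMinus 3 = 2
  nu_pos_p : ∀ n, 4 ≤ n → 1 ≤ nuPlus n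
  nu_pos_m : ∀ n, 4 ≤ n → 1 ≤ nuMinus n
  nu_lt_p : ∀ n, 4 ≤ n → nuPlus n < n
  nu_lt_m : ∀ n, 4 ≤ n → nuMinus n < n
  nu_ne : ∀ n, 4 ≤ n → nuPlus n ≠ nuMinus n
  insert_mem : ∀ n, 4 ≤ n → next (n - 1) (nuMinus n) = nuPlus n
  step_new₁ : ∀ n, 4 ≤ n → next n (nuMinus n) = n
  step_new₂ : ∀ n, 4 ≤ n → next n n = nuPlus n
  step_old : ∀ n, 4 ≤ n → ∀ k, 1 ≤ k → k ≤ n - 1 → k ≠ nuMinus n → next n k = next (n - 1) k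
  prev_next : ∀ m, 3 ≤ m → ∀ k, 1 ≤ k → k ≤ m → prev m (next m k) = k
  next_prev : ∀ m, 3 ≤ m → ∀ k, 1 ≤ k → k ≤ m → next m (prev m k) = k

/-- The pair of neighbors `ν(n) = {ν⁺(n), ν⁻(n)}`, i.e. the cycle-edge into which node `n`
was inserted. -/
def nuSet (H : GrowthHistory) (n : ℕ) : Finset ℕ := {H.nuPlus n, H.nuMinus n}

/-- `{u,v}` is a cycle-edge of the cycle `H_m` (at time `m`). -/
def isEdge (H : GrowthHistory) (m u v : ℕ) : Prop := H.next m u = v ∨ H.next m v = u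

/-- `n` is a vertex of the pedigree graph `G^{AB}` iff `ν_A(n) ≠ ν_B(n)` (for `n ≥ 4`). -/
def isVertex (A B : GrowthHistory) (n : ℕ) : Prop := 4 ≤ n ∧ nuSet A n ≠ nuSet B n

/-- Type-1 edge "from `A` to `B`" between `n` and `k`: `ν_A(n) = ν_B(k)`. -/
def type1 (A B : GrowthHistory) (n k : ℕ) : Prop := nuSet A n = nuSet B k

/-- Type-2 edge "from `A` to `B`" between `n` and `k = max ν_A(n)`: present unless
`ν_B(k) ∩ ν_A(n) ≠ ∅`. -/
def type2 (A B : GrowthHistory) (n k : ℕ) : Prop :=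
  k = max (A.nuPlus n) (A.nuMinus n) ∧ nuSet B k ∩ nuSet A n = ∅

/-- There is an edge "from `A` to `B`" of the pedigree graph between the vertex `n` and the
earlier vertex `k < n`. -/
def edgeFrom (A B : GrowthHistory) (n k : ℕ) : Prop :=
  isVertex A B n ∧ isVertex A B k ∧ k < n ∧ (type1 A B n k ∨ type2 A B n k)

/-- The sentinel node `min({1,2,3} \ {i,j})` used to define the segment between `i` and `j`. -/
def sentinel (i j : ℕ) : ℕ :=
  if 1 ≠ i ∧ 1 ≠ j then 1 else if 2 ≠ i ∧ 2 ≠ j then 2 else 3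

/-- `L` is the list of internal nodes of the open arc ("segment") of the cycle `H_m` between
`i` and `j` which avoids the sentinel node, listed consecutively along the cycle (in one of
the two directions). -/
def IsSegment (H : GrowthHistory) (m i j : ℕ) (L : List ℕ) : Prop :=
  (List.Chain' (fun a b => H.next m a = b) (i :: (L ++ [j])) ∨
    List.Chain' (fun a b => H.next m a = b) (j :: (L ++ [i]))) ∧
  i ∉ L ∧ j ∉ L ∧ sentinel i j ∉ L

namespace GrowthHistory

variable (H : GrowthHistory)

lemma nuM_succ_mem {m : ℕ} (hm : 3 ≤ m) : H.nuMinus (m+1) ∈ Finset.Icc 1 m := by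
  have h1 := H.nu_pos_m (m+1) (by omega)
  have h2 := H.nu_lt_m (m+1) (by omega)
  simp only [Finset.mem_Icc]; omega

lemma nuP_succ_mem {m : ℕ} (hm : 3 ≤ m) : H.nuPlus (m+1) ∈ Finset.Icc 1 m := by
  have h1 := H.nu_pos_p (m+1) (by omega)
  have h2 := H.nu_lt_p (m+1) (by omega)
  simp only [Finset.mem_Icc]; omega

lemma step_old' {m : ℕ} (hm : 3 ≤ m) {k : ℕ} (h1 : 1 ≤ k) (h2 : k ≤ m)
    (h3 : k ≠ H.nuMinus (m+1)) : H.next (m+1) k = H.next m k := by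
  have := H.step_old (m+1) (by omega) k h1 (by omega) h3
  simpa using this

lemma insert_mem' {m : ℕ} (hm : 3 ≤ m) : H.next m (H.nuMinus (m+1)) = H.nuPlus (m+1) := by
  have := H.insert_mem (m+1) (by omega); simpa using this

lemma next_mem : ∀ m, 3 ≤ m → ∀ k ∈ Finset.Icc 1 m, H.next m k ∈ Finset.Icc 1 m := by
  intro m hm
  induction m, hm using Nat.le_induction with
  | base =>
    intro k hk
    simp only [Finset.mem_Icc] at hk ⊢
    obtain ⟨hk1, hk2⟩ := hk
    interval_cases k
    · rw [H.base1]; omega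
    · rw [H.base2]; omega
    · rw [H.base3]; omega
  | succ m hm ih =>
    intro k hk
    simp only [Finset.mem_Icc] at hk ⊢
    rcases eq_or_ne k (m+1) with rfl | hne
    · rw [H.step_new₂ (m+1) (by omega)]
      have := H.nu_pos_p (m+1) (by omega); have := H.nu_lt_p (m+1) (by omega); omega
    rcases eq_or_ne k (H.nuMinus (m+1)) with rfl | hne2
    · rw [H.step_new₁ (m+1) (by omega)]; omega
    · rw [H.step_old' (by omega) hk.1 (by omega) hne2]
      have := ih k (by simp only [Finset.mem_Icc]; omega)
      simp only [Finset.mem_Icc] at this; omega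

lemma next_inj {m : ℕ} (hm : 3 ≤ m) {a b : ℕ} (ha : a ∈ Finset.Icc 1 m)
    (hb : b ∈ Finset.Icc 1 m) (h : H.next m a = H.next m b) : a = b := by
  simp only [Finset.mem_Icc] at ha hb
  have h1 := H.prev_next m hm a ha.1 ha.2
  have h2 := H.prev_next m hm b hb.1 hb.2
  rw [h] at h1; exact h1.symm.trans h2

lemma no_two_cycle : ∀ m, 3 ≤ m → ∀ a b, a ∈ Finset.Icc 1 m → b ∈ Finset.Icc 1 m →
    a ≠ b → H.next m a = b → H.next m b = a → False := by
  intro m hm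
  induction m, hm using Nat.le_induction with
  | base =>
    intro a b ha hb hne h1 h2
    simp only [Finset.mem_Icc] at ha hb
    obtain ⟨ha1, ha2⟩ := ha; obtain ⟨hb1, hb2⟩ := hb
    interval_cases a <;> interval_cases b <;>
      simp_all [H.base1, H.base2, H.base3]
  | succ m hm ih =>
    intro a b ha hb hne h1 h2
    have hmem : ∀ c, c ∈ Finset.Icc 1 (m+1) → c ≠ m+1 → c ∈ Finset.Icc 1 m := by
      intro c hc hcne; simp only [Finset.mem_Icc] at hc ⊢; omega
    rcases eq_or_ne a (m+1) with rfl | hna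
    · -- next (m+1) (m+1) = nuPlus = b ; next (m+1) b = m+1 forces b = nuMinus
      rw [H.step_new₂ (m+1) (by omega)] at h1
      have hb' : b = H.nuMinus (m+1) := by
        apply H.next_inj (m := m+1) (by omega) hb
          (Finset.Icc_subset_Icc le_rfl (by omega) (H.nuM_succ_mem hm))
        rw [h2, H.step_new₁ (m+1) (by omega)]
      exact H.nu_ne (m+1) (by omega) (by rw [h1, hb'])
    rcases eq_or_ne b (m+1) with rfl | hnb
    · rw [H.step_new₂ (m+1) (by omega)] at h2
      have ha' : a = H.nuMinus (m+1) := by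
        apply H.next_inj (m := m+1) (by omega) ha
          (Finset.Icc_subset_Icc le_rfl (by omega) (H.nuM_succ_mem hm))
        rw [h1, H.step_new₁ (m+1) (by omega)]
      exact H.nu_ne (m+1) (by omega) (by rw [h2, ha'])
    · have ha' := hmem a ha hna
      have hb' := hmem b hb hnb
      simp only [Finset.mem_Icc] at ha' hb'
      have hanm : a ≠ H.nuMinus (m+1) := by
        intro e; rw [e, H.step_new₁ (m+1) (by omega)] at h1; omega
      have hbnm : b ≠ H.nuMinus (m+1) := by
        intro e; rw [e, H.step_new₁ (m+1) (by omega)] at h2; omega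
      rw [H.step_old' hm ha'.1 ha'.2 hanm] at h1
      rw [H.step_old' hm hb'.1 hb'.2 hbnm] at h2
      exact ih a b (by simp only [Finset.mem_Icc]; omega)
        (by simp only [Finset.mem_Icc]; omega) hne h1 h2

end GrowthHistory
namespace GrowthHistory

variable (H : GrowthHistory)

lemma isEdge_symm {m u v : ℕ} (h : isEdge H m u v) : isEdge H m v u := h.symm

lemma pair_eq_iff {a b c d : ℕ} :
    ({a, b} : Finset ℕ) = {c, d} ↔ (a = c ∧ b = d) ∨ (a = d ∧ b = c) := by
  constructor
  · intro h
    simp only [Finset.ext_iff, Finset.mem_insert, Finset.mem_singleton] at h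
    have h1 := h a; have h2 := h b; have h3 := h c; have h4 := h d
    omega
  · rintro (⟨rfl, rfl⟩ | ⟨rfl, rfl⟩)
    · rfl
    · exact Finset.pair_comm a b

lemma edge_destroy {m : ℕ} (hm : 3 ≤ m) {u v : ℕ}
    (hu : u ∈ Finset.Icc 1 m) (hv : v ∈ Finset.Icc 1 m)
    (he : isEdge H m u v) (hne : ¬ isEdge H (m+1) u v) : nuSet H (m+1) = {u, v} := by
  simp only [Finset.mem_Icc] at hu hv
  rcases he with he | he
  · rcases eq_or_ne u (H.nuMinus (m+1)) with rfl | hne2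
    · rw [H.insert_mem' hm] at he
      rw [nuSet, pair_eq_iff]; right; exact ⟨he, rfl⟩
    · exact absurd (Or.inl (by rw [H.step_old' hm hu.1 hu.2 hne2]; exact he)) hne
  · rcases eq_or_ne v (H.nuMinus (m+1)) with rfl | hne2
    · rw [H.insert_mem' hm] at he
      rw [nuSet, pair_eq_iff]; left; exact ⟨he, rfl⟩
    · exact absurd (Or.inr (by rw [H.step_old' hm hv.1 hv.2 hne2]; exact he)) hne

lemma edge_persist_down {m : ℕ} (hm : 3 ≤ m) {u v : ℕ}
    (hu : u ∈ Finset.Icc 1 m) (hv : v ∈ Finset.Icc 1 m)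
    (he : isEdge H (m+1) u v) : isEdge H m u v := by
  simp only [Finset.mem_Icc] at hu hv
  rcases he with he | he
  · have hne2 : u ≠ H.nuMinus (m+1) := by
      intro e; rw [e, H.step_new₁ (m+1) (by omega)] at he; omega
    rw [H.step_old' hm hu.1 hu.2 hne2] at he; exact Or.inl he
  · have hne2 : v ≠ H.nuMinus (m+1) := by
      intro e; rw [e, H.step_new₁ (m+1) (by omega)] at he; omega
    rw [H.step_old' hm hv.1 hv.2 hne2] at he; exact Or.inr he

lemma edge_persist_down' {m t : ℕ} (hm : 3 ≤ m) (hmt : m ≤ t) {u v : ℕ}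
    (hu : u ∈ Finset.Icc 1 m) (hv : v ∈ Finset.Icc 1 m)
    (he : isEdge H t u v) : isEdge H m u v := by
  induction t, hmt using Nat.le_induction with
  | base => exact he
  | succ t ht ih => exact ih (H.edge_persist_down (by omega)
      (Finset.Icc_subset_Icc le_rfl (by omega) hu)
      (Finset.Icc_subset_Icc le_rfl (by omega) hv) he)

lemma edge_new {m : ℕ} (hm : 4 ≤ m) {x : ℕ} (hx : x ∈ nuSet H m) : isEdge H m m x := by
  rw [nuSet, Finset.mem_insert, Finset.mem_singleton] at hx
  rcases hx with rfl | rfl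
  · exact Or.inl (H.step_new₂ m hm)
  · exact Or.inr (H.step_new₁ m hm)

lemma edge_new_only {m : ℕ} (hm : 4 ≤ m) {x : ℕ} (hx : x ∈ Finset.Icc 1 m) (hxm : x ≠ m)
    (he : isEdge H m m x) : x ∈ nuSet H m := by
  simp only [Finset.mem_Icc] at hx
  rcases he with he | he
  · rw [H.step_new₂ m hm] at he
    rw [nuSet]; simp [he]
  · rcases eq_or_ne x (H.nuMinus m) with rfl | hne2
    · rw [nuSet]; simp
    · exfalso
      rw [H.step_old m hm x hx.1 (by omega) hne2] at he
      have := H.next_mem (m-1) (by omega) x (by simp only [Finset.mem_Icc]; omega)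
      rw [he] at this; simp only [Finset.mem_Icc] at this; omega

lemma not_edge_nu {m : ℕ} (hm : 4 ≤ m) : ¬ isEdge H m (H.nuPlus m) (H.nuMinus m) := by
  rintro (he | he)
  · have hpm := H.nu_lt_p m hm
    have hp1 := H.nu_pos_p m hm
    have hmm := H.nu_lt_m m hm
    have hm1 := H.nu_pos_m m hm
    rw [H.step_old m hm _ hp1 (by omega) (H.nu_ne m hm)] at he
    exact H.no_two_cycle (m-1) (by omega) (H.nuPlus m) (H.nuMinus m)
      (by simp only [Finset.mem_Icc]; omega) (by simp only [Finset.mem_Icc]; omega)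
      (H.nu_ne m hm) he (H.insert_mem m hm)
  · rw [H.step_new₁ m hm] at he
    have := H.nu_lt_p m hm; omega

lemma triangle_edge {a b : ℕ} (ha : a ∈ Finset.Icc 1 3) (hb : b ∈ Finset.Icc 1 3)
    (hne : a ≠ b) : isEdge H 3 a b := by
  simp only [Finset.mem_Icc] at ha hb
  obtain ⟨ha1, ha2⟩ := ha; obtain ⟨hb1, hb2⟩ := hb
  interval_cases a <;> interval_cases b <;>
    simp_all [isEdge, H.base1, H.base2, H.base3]

lemma edge_of_nuSet_eq {k u v : ℕ} (hk : 4 ≤ k) (h : nuSet H k = {u, v}) :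
    isEdge H (k-1) u v := by
  rw [nuSet, pair_eq_iff] at h
  have := H.insert_mem k hk
  rcases h with ⟨h1, h2⟩ | ⟨h1, h2⟩
  · exact Or.inr (by rw [← h1, ← h2]; exact this)
  · exact Or.inl (by rw [← h1, ← h2]; exact this)

lemma not_edge_of_nuSet_eq {k u v : ℕ} (hk : 4 ≤ k) (h : nuSet H k = {u, v}) :
    ¬ isEdge H k u v := by
  rw [nuSet, pair_eq_iff] at h
  have := H.not_edge_nu hk
  rcases h with ⟨h1, h2⟩ | ⟨h1, h2⟩
  · rw [← h1, ← h2]; exact this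
  · rw [← h1, ← h2]; exact fun he => this (isEdge_symm H he)

end GrowthHistory
namespace GrowthHistory

variable (H : GrowthHistory)

/-- A cyclic enumeration of the cycle at time `m`. -/
def CycEnum (m : ℕ) (C : List ℕ) : Prop :=
  List.Chain' (fun a b => H.next m a = b) C ∧ C.Nodup ∧
  (∀ x, x ∈ C ↔ x ∈ Finset.Icc 1 m) ∧
  (∀ x ∈ C.getLast?, ∀ y ∈ C.head?, H.next m x = y)

lemma chain_lift {m : ℕ} (hm : 3 ≤ m) :
    ∀ (l : List ℕ), List.Chain' (fun a b => H.next m a = b) l →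
    (∀ x ∈ l, x ∈ Finset.Icc 1 m) → H.nuMinus (m+1) ∉ l.dropLast →
    List.Chain' (fun a b => H.next (m+1) a = b) l := by
  intro l
  induction l with
  | nil => intro _ _ _; exact List.isChain_nil
  | cons x t ih =>
    intro hc hmem hν
    cases t with
    | nil => exact List.isChain_singleton x
    | cons y r =>
      rw [List.Chain', List.isChain_cons_cons] at hc ⊢
      rw [List.dropLast_cons₂] at hν
      have hx := hmem x (by simp)
      simp only [Finset.mem_Icc] at hx
      have hxν : x ≠ H.nuMinus (m+1) := by intro e; exact hν (by simp [e])
      refine ⟨?_, ih hc.2 (fun z hz => hmem z (by simp [hz])) (fun hz => hν (by simp [hz]))⟩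
      rw [H.step_old' hm hx.1 hx.2 hxν]; exact hc.1

lemma cycEnum_rotate {m : ℕ} {X Y : List ℕ} {a : ℕ}
    (hC : CycEnum H m (X ++ a :: Y)) : CycEnum H m (a :: (Y ++ X)) := by
  obtain ⟨hch, hnd, hmem, hwrap⟩ := hC
  cases X with
  | nil => simpa using ⟨hch, hnd, hmem, hwrap⟩
  | cons x0 X' =>
    have hperm : (x0 :: X' ++ a :: Y).Perm (a :: (Y ++ (x0 :: X'))) := by
      have h1 : ((x0 :: X') ++ a :: Y).Perm (a :: ((x0 :: X') ++ Y)) := List.perm_middle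
      exact h1.trans (List.Perm.cons a (List.perm_append_comm))
    rw [List.Chain', List.isChain_append] at hch
    obtain ⟨hchX, hchaY, hlink⟩ := hch
    refine ⟨?_, hperm.nodup hnd, fun x => (hperm.mem_iff).symm.trans (hmem x), ?_⟩
    · have heq : (a :: (Y ++ x0 :: X')) = (a :: Y) ++ (x0 :: X') := by simp
      rw [heq, List.Chain', List.isChain_append]
      refine ⟨hchaY, hchX, ?_⟩
      intro x hx y hy
      refine hwrap x ?_ y ?_
      · rw [List.getLast?_append_of_ne_nil _ (by simp)]; exact hx
      · simpa using hy
    · intro x hx y hy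
      have hx' : x ∈ (x0 :: X').getLast? := by
        have heq : (a :: (Y ++ x0 :: X')) = (a :: Y) ++ (x0 :: X') := by simp
        rw [heq, List.getLast?_append_of_ne_nil _ (by simp)] at hx
        exact hx
      have hy' : a = y := by simpa using hy
      subst hy'
      exact hlink x hx' a (by simp)

lemma cycEnum_exists : ∀ m, 3 ≤ m → ∃ C, CycEnum H m C := by
  intro m hm
  induction m, hm using Nat.le_induction with
  | base =>
    refine ⟨[1, 2, 3], ?_, by decide, ?_, ?_⟩
    · simp [List.Chain', List.isChain_cons_cons, H.base1, H.base2]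
    · intro x
      simp only [List.mem_cons, List.not_mem_nil, or_false, Finset.mem_Icc]
      omega
    · intro x hx y hy
      have hx' : (3:ℕ) = x := by simpa using hx
      have hy' : (1:ℕ) = y := by simpa using hy
      rw [← hx', ← hy']; exact H.base3
  | succ m hm ih =>
    obtain ⟨C, hC⟩ := ih
    have hν : H.nuMinus (m+1) ∈ C := (hC.2.2.1 _).2 (H.nuM_succ_mem hm)
    obtain ⟨X, Y, rfl⟩ := List.append_of_mem hν
    have hC' := H.cycEnum_rotate hC
    set ν := H.nuMinus (m+1) with hνdef
    obtain ⟨hch, hnd, hmem, hwrap⟩ := hC'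
    have hT1 : (1 ∈ (ν :: (Y ++ X))) := (hmem 1).2 (by simp only [Finset.mem_Icc]; omega)
    have hT2 : (2 ∈ (ν :: (Y ++ X))) := (hmem 2).2 (by simp only [Finset.mem_Icc]; omega)
    have hTne : Y ++ X ≠ [] := by
      intro e; rw [e] at hT1 hT2; simp at hT1 hT2; omega
    obtain ⟨t0, T', hTT⟩ : ∃ t0 T', Y ++ X = t0 :: T' :=
      ⟨(Y ++ X).head hTne, (Y ++ X).tail, (List.cons_head_tail hTne).symm⟩
    rw [hTT] at hch hnd hmem hwrap
    -- key facts
    have hmemIcc : ∀ x ∈ ν :: t0 :: T', x ∈ Finset.Icc 1 m := fun x hx => (hmem x).1 hx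
    have hνnot : ν ∉ t0 :: T' := by
      have := hnd; rw [List.nodup_cons] at this; exact this.1
    have ht0 : H.next m ν = t0 := by
      rw [List.Chain', List.isChain_cons_cons] at hch; exact hch.1
    refine ⟨ν :: (m+1) :: t0 :: T', ?_, ?_, ?_, ?_⟩
    · rw [List.Chain', List.isChain_cons_cons, List.isChain_cons_cons]
      refine ⟨H.step_new₁ (m+1) (by omega), ?_, ?_⟩
      · rw [H.step_new₂ (m+1) (by omega), ← H.insert_mem' hm, ht0]
      · apply H.chain_lift hm
        · rw [List.Chain', List.isChain_cons_cons] at hch; exact hch.2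
        · intro x hx; exact Finset.Icc_subset_Icc le_rfl (by omega) (hmemIcc x (by simp [hx]))
        · intro hc; exact hνnot (List.dropLast_subset _ hc)
    · rw [List.nodup_cons, List.nodup_cons]
      have hm1 : (m+1) ∉ ν :: t0 :: T' := by
        intro hc; have := hmemIcc _ hc; simp only [Finset.mem_Icc] at this; omega
      rw [List.nodup_cons] at hnd
      refine ⟨?_, fun hc => hm1 (by simp [hc]), hnd.2⟩
      intro hc
      rw [List.mem_cons] at hc
      rcases hc with hc | hc
      · have := hmemIcc ν (by simp)
        simp only [Finset.mem_Icc] at this; omega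
      · exact hνnot hc
    · intro x
      simp only [List.mem_cons, Finset.mem_Icc]
      constructor
      · rintro (rfl | rfl | hx)
        · have := hmemIcc ν (by simp); simp only [Finset.mem_Icc] at this; omega
        · omega
        · have := hmemIcc x (by simp [hx]); simp only [Finset.mem_Icc] at this; omega
      · intro hx
        rcases eq_or_ne x (m+1) with rfl | hne
        · tauto
        · have : x ∈ ν :: t0 :: T' := (hmem x).2 (by simp only [Finset.mem_Icc]; omega)
          simp only [List.mem_cons] at this; tauto
    · intro x hx y hy
      have hy' : ν = y := by simpa using hy
      subst hy'
      have hgl : (ν :: (m+1) :: t0 :: T').getLast? = (ν :: t0 :: T').getLast? := by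
        simp
      rw [hgl] at hx
      have hlast : x ∈ (ν :: t0 :: T').getLast? := hx
      have hx2 : x ∈ (t0 :: T').getLast? := by
        rw [List.getLast?_cons_cons] at hlast; exact hlast
      have hxtail : x ∈ t0 :: T' := List.mem_of_getLast? hx2
      have hxmem : x ∈ ν :: t0 :: T' := by simp [hxtail]
      have hxν : x ≠ ν := fun e => hνnot (e ▸ hxtail)
      have hwx := hwrap x hlast ν (by simp)
      have hxI := hmemIcc x hxmem
      simp only [Finset.mem_Icc] at hxI
      rw [H.step_old' hm hxI.1 hxI.2 hxν]
      exact hwx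

end GrowthHistory
namespace GrowthHistory

variable (H : GrowthHistory)

def ArcPair (m a b : ℕ) (L1 L2 : List ℕ) : Prop :=
  List.Chain' (fun x y => H.next m x = y) (a :: (L1 ++ [b])) ∧
  List.Chain' (fun x y => H.next m x = y) (b :: (L2 ++ [a])) ∧
  (a :: (L1 ++ b :: L2)).Nodup ∧
  (∀ x, x ∈ a :: (L1 ++ b :: L2) ↔ x ∈ Finset.Icc 1 m)

lemma chain_unique {m : ℕ} : ∀ (L L' : List ℕ) (a b : ℕ),
    List.Chain' (fun x y => H.next m x = y) (a :: (L ++ [b])) →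
    List.Chain' (fun x y => H.next m x = y) (a :: (L' ++ [b])) →
    b ∉ L → b ∉ L' → L = L' := by
  intro L
  induction L with
  | nil =>
    intro L' a b h1 h2 _ hb'
    cases L' with
    | nil => rfl
    | cons x L'' =>
      exfalso
      simp only [List.nil_append] at h1
      rw [List.Chain', List.isChain_cons_cons] at h1
      simp only [List.cons_append] at h2
      rw [List.Chain', List.isChain_cons_cons] at h2
      have : x = b := h2.1.symm.trans h1.1
      exact hb' (by simp [this])
  | cons x L₁ ih =>
    intro L' a b h1 h2 hb hb'
    cases L' with
    | nil =>
      exfalso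
      simp only [List.nil_append] at h2
      rw [List.Chain', List.isChain_cons_cons] at h2
      simp only [List.cons_append] at h1
      rw [List.Chain', List.isChain_cons_cons] at h1
      have : x = b := h1.1.symm.trans h2.1
      exact hb (by simp [this])
    | cons x' L₁' =>
      simp only [List.cons_append] at h1 h2
      rw [List.Chain', List.isChain_cons_cons] at h1 h2
      have hxx : x = x' := h1.1.symm.trans h2.1
      subst hxx
      have := ih L₁' x b h1.2 h2.2 (fun hc => hb (by simp [hc])) (fun hc => hb' (by simp [hc]))
      rw [this]

lemma arcPair_symm {m a b : ℕ} {L1 L2 : List ℕ} (h : ArcPair H m a b L1 L2) :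
    ArcPair H m b a L2 L1 := by
  obtain ⟨h1, h2, hnd, hmem⟩ := h
  have hperm : (a :: (L1 ++ b :: L2)).Perm (b :: (L2 ++ a :: L1)) := by
    have e1 : (a :: (L1 ++ b :: L2)) = (a :: L1) ++ (b :: L2) := by simp
    have e2 : (b :: (L2 ++ a :: L1)) = (b :: L2) ++ (a :: L1) := by simp
    rw [e1, e2]; exact List.perm_append_comm
  exact ⟨h2, h1, hperm.nodup hnd, fun x => (hperm.mem_iff).symm.trans (hmem x)⟩

lemma exists_arcPair {m a b : ℕ} (hm : 3 ≤ m) (ha : a ∈ Finset.Icc 1 m)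
    (hb : b ∈ Finset.Icc 1 m) (hab : a ≠ b) : ∃ L1 L2, ArcPair H m a b L1 L2 := by
  obtain ⟨C, hC⟩ := H.cycEnum_exists m hm
  have haC : a ∈ C := (hC.2.2.1 a).2 ha
  obtain ⟨X, Y, rfl⟩ := List.append_of_mem haC
  have hC' := H.cycEnum_rotate hC
  obtain ⟨hch, hnd, hmem, hwrap⟩ := hC'
  have hbC : b ∈ a :: (Y ++ X) := (hmem b).2 hb
  have hbT : b ∈ Y ++ X := by
    rw [List.mem_cons] at hbC; rcases hbC with e | hbT
    · exact absurd e.symm hab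
    · exact hbT
  obtain ⟨L1, L2, hLT⟩ := List.append_of_mem hbT
  rw [hLT] at hch hnd hmem hwrap
  refine ⟨L1, L2, ?_, ?_, hnd, hmem⟩
  · -- chain a :: L1 ++ [b]
    have he : a :: (L1 ++ b :: L2) = (a :: L1) ++ (b :: L2) := by simp
    rw [he, List.Chain', List.isChain_append] at hch
    have hgoal : a :: (L1 ++ [b]) = (a :: L1) ++ [b] := by simp
    rw [hgoal, List.Chain', List.isChain_append]
    refine ⟨hch.1, List.isChain_singleton b, ?_⟩
    intro x hx y hy
    have : b = y := by simpa using hy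
    subst this
    exact hch.2.2 x hx b (by simp)
  · -- chain b :: L2 ++ [a]
    have he : a :: (L1 ++ b :: L2) = (a :: L1) ++ (b :: L2) := by simp
    rw [he, List.Chain', List.isChain_append] at hch
    have hgoal : b :: (L2 ++ [a]) = (b :: L2) ++ [a] := by simp
    rw [hgoal, List.Chain', List.isChain_append]
    refine ⟨hch.2.1, List.isChain_singleton a, ?_⟩
    intro x hx y hy
    have : a = y := by simpa using hy
    subst this
    refine hwrap x ?_ a (by simp)
    rw [he, List.getLast?_append_of_ne_nil _ (by simp)]
    exact hx

lemma chain_insert {m : ℕ} (hm : 3 ≤ m) {X Y : List ℕ}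
    (hc : List.Chain' (fun x y => H.next m x = y) (X ++ H.nuMinus (m+1) :: Y))
    (hY : Y ≠ [])
    (hmem : ∀ x ∈ X ++ H.nuMinus (m+1) :: Y, x ∈ Finset.Icc 1 m)
    (hnX : H.nuMinus (m+1) ∉ X) (hnY : H.nuMinus (m+1) ∉ Y.dropLast) :
    List.Chain' (fun x y => H.next (m+1) x = y) (X ++ H.nuMinus (m+1) :: (m+1) :: Y) := by
  set ν := H.nuMinus (m+1) with hν
  rw [List.Chain', List.isChain_append] at hc ⊢
  obtain ⟨hcX, hcνY, hlink⟩ := hc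
  refine ⟨?_, ?_, ?_⟩
  · exact H.chain_lift hm X hcX (fun x hx => hmem x (by simp [hx]))
      (fun hc => hnX (List.dropLast_subset _ hc))
  · obtain ⟨y0, Y', rfl⟩ : ∃ y0 Y', Y = y0 :: Y' :=
      ⟨Y.head hY, Y.tail, (List.cons_head_tail hY).symm⟩
    rw [List.isChain_cons_cons] at hcνY
    rw [List.isChain_cons_cons, List.isChain_cons_cons]
    refine ⟨H.step_new₁ (m+1) (by omega), ?_, ?_⟩
    · rw [H.step_new₂ (m+1) (by omega), ← H.insert_mem' hm, hcνY.1]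
    · apply H.chain_lift hm _ hcνY.2
      · intro x hx; exact hmem x (by simp [hx])
      · exact hnY
  · intro x hx y hy
    have : ν = y := by simpa using hy
    subst this
    have hxX : x ∈ X := List.mem_of_getLast? hx
    have hxI := hmem x (by simp [hxX])
    simp only [Finset.mem_Icc] at hxI
    rw [H.step_old' hm hxI.1 hxI.2 (fun e => hnX (by rw [hν, ← e]; exact hxX))]
    exact hlink x hx ν (by simp)

end GrowthHistory
namespace GrowthHistory

variable (H : GrowthHistory)

lemma arcPair_step_left {m a b : ℕ} {L1 L2 : List ℕ} (hm : 3 ≤ m)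
    (hAP : ArcPair H m a b L1 L2) (hν : H.nuMinus (m+1) ∈ a :: L1) :
    ∃ L1', ArcPair H (m+1) a b L1' L2 ∧ (∀ x ∈ L1, x ∈ L1') ∧
      (∀ x ∈ L1', x ∈ L1 ∨ x = m+1) := by
  obtain ⟨hc1, hc2, hnd, hmem⟩ := hAP
  set ν := H.nuMinus (m+1) with hνdef
  have hfull : a :: (L1 ++ b :: L2) = (a :: L1) ++ (b :: L2) := by simp
  have hndapp : ((a :: L1) ++ (b :: L2)).Nodup := by rw [← hfull]; exact hnd
  have hdisj : ∀ x ∈ a :: L1, x ∉ b :: L2 :=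
    fun x hx hx' => (List.nodup_append'.mp hndapp).2.2 hx hx'
  have hmemIcc : ∀ x ∈ (a :: L1) ++ (b :: L2), x ∈ Finset.Icc 1 m := by
    intro x hx; exact (hmem x).1 (by rw [hfull]; exact hx)
  have hnd1 : (a :: L1).Nodup := (List.nodup_append.mp hndapp).1
  -- split a :: L1 at ν
  obtain ⟨X, Y, hXY⟩ := List.append_of_mem hν
  have hνXY : ν ∉ X ++ Y := by
    have h1 : (X ++ ν :: Y).Nodup := by rw [← hXY]; exact hnd1
    exact (List.nodup_cons.mp (List.nodup_middle.mp h1)).1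
  have hνX : ν ∉ X := fun hc => hνXY (by simp [hc])
  have hνY : ν ∉ Y := fun hc => hνXY (by simp [hc])
  have hνL2 : ν ∉ b :: L2 := hdisj ν hν
  -- the new left list
  obtain ⟨L1', hL1'eq, hsub, hsup⟩ :
      ∃ L1', a :: L1' = X ++ ν :: (m+1) :: Y ∧ (∀ x ∈ L1, x ∈ L1') ∧
        (∀ x ∈ L1', x ∈ L1 ∨ x = m+1) := by
    cases X with
    | nil =>
      simp only [List.nil_append, List.cons.injEq] at hXY
      obtain ⟨h1, h2⟩ := hXY
      refine ⟨(m+1) :: Y, by rw [h1]; rfl, ?_, ?_⟩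
      · intro x hx; rw [h2] at hx; simp [hx]
      · intro x hx; rw [h2]
        simp only [List.mem_cons] at hx; tauto
    | cons c X' =>
      simp only [List.cons_append, List.cons.injEq] at hXY
      obtain ⟨rfl, hL1⟩ := hXY
      refine ⟨X' ++ ν :: (m+1) :: Y, by simp, ?_, ?_⟩
      · intro x hx
        rw [hL1] at hx
        simp only [List.mem_append, List.mem_cons] at hx ⊢
        tauto
      · intro x hx
        rw [hL1]
        simp only [List.mem_append, List.mem_cons] at hx ⊢
        tauto
  have e0 : a :: (L1 ++ [b]) = X ++ ν :: (Y ++ [b]) := by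
    rw [show a :: (L1 ++ [b]) = (a :: L1) ++ [b] by simp, hXY]; simp
  have e1 : a :: (L1' ++ [b]) = X ++ ν :: (m+1) :: (Y ++ [b]) := by
    rw [show a :: (L1' ++ [b]) = (a :: L1') ++ [b] by simp, hL1'eq]; simp
  -- permutation for nodup and membership
  have efull' : a :: (L1' ++ b :: L2) = (X ++ [ν]) ++ (m+1) :: (Y ++ b :: L2) := by
    rw [show a :: (L1' ++ b :: L2) = (a :: L1') ++ (b :: L2) by simp, hL1'eq]; simp
  have efull0 : a :: (L1 ++ b :: L2) = (X ++ [ν]) ++ (Y ++ b :: L2) := by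
    rw [hfull, hXY]; simp
  have hperm : (a :: (L1' ++ b :: L2)).Perm ((m+1) :: (a :: (L1 ++ b :: L2))) := by
    rw [efull', efull0]
    exact List.perm_middle
  have hm1full : (m+1) ∉ a :: (L1 ++ b :: L2) := by
    intro hc
    have := (hmem _).1 hc
    simp only [Finset.mem_Icc] at this; omega
  refine ⟨L1', ⟨?_, ?_, ?_, ?_⟩, hsub, hsup⟩
  · -- chain 1 at time m+1
    rw [e1]
    apply H.chain_insert hm
    · rw [← e0]; exact hc1
    · simp
    · intro x hx
      rw [← e0] at hx
      simp only [List.mem_cons, List.mem_append, List.mem_singleton] at hx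
      apply hmemIcc
      simp only [List.mem_append, List.mem_cons]
      tauto
    · exact hνX
    · rw [List.dropLast_concat]; exact hνY
  · -- chain 2 lifted
    apply H.chain_lift hm _ hc2
    · intro x hx
      simp only [List.mem_cons, List.mem_append, List.mem_singleton] at hx
      apply hmemIcc
      simp only [List.mem_append, List.mem_cons]
      tauto
    · rw [show b :: (L2 ++ [a]) = (b :: L2) ++ [a] by simp, List.dropLast_concat]
      exact hνL2
  · exact hperm.symm.nodup (List.nodup_cons.mpr ⟨hm1full, hnd⟩)
  · intro x
    rw [hperm.mem_iff, List.mem_cons, hmem x]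
    simp only [Finset.mem_Icc]
    omega

lemma arcPair_step {m a b : ℕ} {L1 L2 : List ℕ} (hm : 3 ≤ m)
    (hAP : ArcPair H m a b L1 L2) :
    ∃ L1' L2', ArcPair H (m+1) a b L1' L2' ∧ (∀ x ∈ L1, x ∈ L1') ∧ (∀ x ∈ L2, x ∈ L2') ∧
      (∀ x ∈ L1', x ∈ L1 ∨ x = m+1) ∧ (∀ x ∈ L2', x ∈ L2 ∨ x = m+1) := by
  have hνmem : H.nuMinus (m+1) ∈ a :: (L1 ++ b :: L2) :=
    (hAP.2.2.2 _).2 (H.nuM_succ_mem hm)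
  have : H.nuMinus (m+1) ∈ a :: L1 ∨ H.nuMinus (m+1) ∈ b :: L2 := by
    simp only [List.mem_cons, List.mem_append] at hνmem ⊢
    tauto
  rcases this with hside | hside
  · obtain ⟨L1', hAP', hsub, hsup⟩ := H.arcPair_step_left hm hAP hside
    exact ⟨L1', L2, hAP', hsub, fun x hx => hx, hsup, fun x hx => Or.inl hx⟩
  · obtain ⟨L2', hAP', hsub, hsup⟩ := H.arcPair_step_left hm (H.arcPair_symm hAP) hside
    exact ⟨L1, L2', H.arcPair_symm hAP', fun x hx => hx, hsub, fun x hx => Or.inl hx, hsup⟩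

lemma arcPair_iter {m t a b : ℕ} {L1 L2 : List ℕ} (hm : 3 ≤ m) (hmt : m ≤ t)
    (hAP : ArcPair H m a b L1 L2) :
    ∃ L1' L2', ArcPair H t a b L1' L2' ∧ (∀ x ∈ L1, x ∈ L1') ∧ (∀ x ∈ L2, x ∈ L2') ∧
      (∀ x ∈ L1', x ∈ L1 ∨ m < x) ∧ (∀ x ∈ L2', x ∈ L2 ∨ m < x) := by
  induction t, hmt using Nat.le_induction with
  | base => exact ⟨L1, L2, hAP, fun x hx => hx, fun x hx => hx,
      fun x hx => Or.inl hx, fun x hx => Or.inl hx⟩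
  | succ t ht ih =>
    obtain ⟨L1', L2', hAP', hs1, hs2, hp1, hp2⟩ := ih
    obtain ⟨L1'', L2'', hAP'', hs1', hs2', hp1', hp2'⟩ := H.arcPair_step (by omega) hAP'
    refine ⟨L1'', L2'', hAP'', fun x hx => hs1' x (hs1 x hx), fun x hx => hs2' x (hs2 x hx),
      ?_, ?_⟩
    · intro x hx
      rcases hp1' x hx with hx' | rfl
      · exact hp1 x hx'
      · right; omega
    · intro x hx
      rcases hp2' x hx with hx' | rfl
      · exact hp2 x hx'
      · right; omega

end GrowthHistory
namespace GrowthHistory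

variable (H : GrowthHistory)

lemma arcPair_nodup_facts {m a b : ℕ} {L1 L2 : List ℕ} (h : ArcPair H m a b L1 L2) :
    a ∉ L1 ∧ a ∉ L2 ∧ b ∉ L1 ∧ b ∉ L2 ∧ a ≠ b ∧ (∀ x ∈ L1, x ∉ L2) := by
  have hnd := h.2.2.1
  rw [List.nodup_cons, List.nodup_append'] at hnd
  obtain ⟨ha, hL1, hbL2, hdisj⟩ := hnd
  simp only [List.mem_append, List.mem_cons, not_or] at ha
  rw [List.nodup_cons] at hbL2
  refine ⟨ha.1, fun hc => ha.2.2 hc, ?_, hbL2.1, ha.2.1, ?_⟩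
  · intro hc; exact hdisj hc (by simp)
  · intro x hx hx'; exact hdisj hx (by simp [hx'])

lemma arcPair_mem {m a b : ℕ} {L1 L2 : List ℕ} (h : ArcPair H m a b L1 L2) (x : ℕ) :
    x = a ∨ x = b ∨ x ∈ L1 ∨ x ∈ L2 ↔ x ∈ Finset.Icc 1 m := by
  rw [← h.2.2.2 x]
  simp only [List.mem_cons, List.mem_append]
  tauto

end GrowthHistory

namespace GrowthHistory

lemma sentinel_facts {i j : ℕ} (hij : i ≠ j) :
    1 ≤ sentinel i j ∧ sentinel i j ≤ 3 ∧ sentinel i j ≠ i ∧ sentinel i j ≠ j := by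
  unfold sentinel
  split_ifs with h1 h2
  · exact ⟨le_rfl, by omega, h1.1, h1.2⟩
  · exact ⟨by omega, by omega, h2.1, h2.2⟩
  · push_neg at h1 h2
    refine ⟨by omega, le_rfl, ?_, ?_⟩ <;> omega

lemma seg_all_big (B : GrowthHistory) {n' p q j : ℕ} {L1 L2 : List ℕ}
    (hAP : ArcPair B n' p q L1 L2)
    (hbig : (∀ x ∈ L1, j ≤ x) ∨ (∀ x ∈ L2, j ≤ x))
    (hj4 : 4 ≤ j) (hpq : p ≠ q) (hn3 : 3 ≤ n') (hpj : p < j) (hqj : q < j) :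
    ∀ L, IsSegment B n' p q L → ∀ x ∈ L, p < x ∧ q < x := by
  obtain ⟨hsl, hsu, hsp, hsq⟩ := sentinel_facts hpq
  have hnd := B.arcPair_nodup_facts hAP
  have hsmem : sentinel p q ∈ Finset.Icc 1 n' := by simp only [Finset.mem_Icc]; omega
  have hsor : sentinel p q ∈ L1 ∨ sentinel p q ∈ L2 := by
    have := (B.arcPair_mem hAP (sentinel p q)).2 hsmem
    tauto
  intro L hseg x hx
  obtain ⟨hch, hpL, hqL, hsL⟩ := hseg
  rcases hbig with hbig | hbig
  · have hsL2 : sentinel p q ∈ L2 := by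
      rcases hsor with hc | hc
      · exact absurd (hbig _ hc) (by omega)
      · exact hc
    rcases hch with hch | hch
    · have he : L = L1 := B.chain_unique L L1 p q hch hAP.1 hqL hnd.2.2.1
      rw [he] at hx
      have := hbig x hx; omega
    · have he : L = L2 := B.chain_unique L L2 q p hch hAP.2.1 hpL hnd.2.1
      rw [he] at hsL
      exact absurd hsL2 hsL
  · have hsL1 : sentinel p q ∈ L1 := by
      rcases hsor with hc | hc
      · exact hc
      · exact absurd (hbig _ hc) (by omega)
    rcases hch with hch | hch
    · have he : L = L1 := B.chain_unique L L1 p q hch hAP.1 hqL hnd.2.2.1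
      rw [he] at hsL
      exact absurd hsL1 hsL
    · have he : L = L2 := B.chain_unique L L2 q p hch hAP.2.1 hpL hnd.2.1
      rw [he] at hx
      have := hbig x hx; omega

end GrowthHistory

/-- If `ν_A(n)` is not a cycle-edge of `B_{n-1}`, then `n` is a vertex of the pedigree graph,
and there is exactly one edge "from `A` to `B`" incident to `n`; it is a type-1 edge if every
node in the segment of `B` between `ν_A⁺(n)` and `ν_A⁻(n)` exceeds both of these nodes, and a
type-2 edge otherwise. -/
theorem unique_AB_edge_of_not_common (A B : GrowthHistory) (n : ℕ) (hn : 4 ≤ n)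
    (h : ¬ isEdge B (n - 1) (A.nuPlus n) (A.nuMinus n)) :
    isVertex A B n ∧ (∃! k, edgeFrom A B n k) ∧
    ((∀ L, IsSegment B (n - 1) (A.nuPlus n) (A.nuMinus n) L →
        ∀ x ∈ L, A.nuPlus n < x ∧ A.nuMinus n < x) →
      ∀ k, edgeFrom A B n k → type1 A B n k) ∧
    (¬ (∀ L, IsSegment B (n - 1) (A.nuPlus n) (A.nuMinus n) L →
        ∀ x ∈ L, A.nuPlus n < x ∧ A.nuMinus n < x) →
      ∀ k, edgeFrom A B n k → type2 A B n k) := by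
  classical
  set p := A.nuPlus n with hpdef
  set q := A.nuMinus n with hqdef
  have hp1 : 1 ≤ p := A.nu_pos_p n hn
  have hq1 : 1 ≤ q := A.nu_pos_m n hn
  have hpn : p < n := A.nu_lt_p n hn
  have hqn : q < n := A.nu_lt_m n hn
  have hpq : p ≠ q := A.nu_ne n hn
  have hn5 : 5 ≤ n := by
    by_contra hc
    have h3 : n - 1 = 3 := by omega
    apply h
    rw [h3]
    exact B.triangle_edge (by simp only [Finset.mem_Icc]; omega)
      (by simp only [Finset.mem_Icc]; omega) hpq
  have hvn : isVertex A B n := by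
    refine ⟨hn, fun he => h ?_⟩
    have hB : nuSet B n = {p, q} := by rw [← he]; rfl
    exact B.edge_of_nuSet_eq hn hB
  have hEA : isEdge A (n-1) p q := Or.inr (A.insert_mem n hn)
  have hpM : p ≤ max p q := le_max_left p q
  have hqM : q ≤ max p q := le_max_right p q
  have hMn : max p q ≤ n - 1 := by
    rcases max_cases p q with ⟨e, _⟩ | ⟨e, _⟩ <;> rw [e] <;> omega
  by_cases hE : isEdge B (max (max p q) 3) p q
  · -- Case I : the pair was an edge of B at time T and was destroyed at time j
    have hTn : max (max p q) 3 ≤ n - 1 := by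
      simp only [max_le_iff]; omega
    have hTM : max p q ≤ max (max p q) 3 := le_max_left _ _
    have h3T : 3 ≤ max (max p q) 3 := le_max_right _ _
    have hTlt : max (max p q) 3 < n - 1 := by
      rcases lt_or_eq_of_le hTn with h' | h'
      · exact h'
      · rw [h'] at hE; exact absurd hE h
    have hexQ : ∃ t, max (max p q) 3 < t ∧ ¬ isEdge B t p q := ⟨n-1, hTlt, h⟩
    obtain ⟨j, ⟨hjT, hjE⟩, hjmin⟩ :
        ∃ j, (max (max p q) 3 < j ∧ ¬ isEdge B j p q) ∧
          ∀ t, (max (max p q) 3 < t ∧ ¬ isEdge B t p q) → j ≤ t :=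
      ⟨Nat.find hexQ, Nat.find_spec hexQ, fun t ht => Nat.find_min' hexQ ht⟩
    have hjle : j ≤ n - 1 := hjmin (n-1) ⟨hTlt, h⟩
    have hj4 : 4 ≤ j := by omega
    have hpj : p < j := by omega
    have hqj : q < j := by omega
    have hEj1 : isEdge B (j-1) p q := by
      rcases lt_or_eq_of_le (show max (max p q) 3 ≤ j - 1 by omega) with hlt | heq
      · by_contra hc
        have := hjmin (j-1) ⟨hlt, hc⟩; omega
      · rw [← heq]; exact hE
    have hj1 : j - 1 + 1 = j := by omega
    have hnus : nuSet B j = {p, q} := by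
      have := B.edge_destroy (m := j - 1) (by omega)
        (by simp only [Finset.mem_Icc]; omega) (by simp only [Finset.mem_Icc]; omega)
        hEj1 (by rw [hj1]; exact hjE)
      rw [hj1] at this; exact this
    have htype1 : type1 A B n j := by
      show nuSet A n = nuSet B j
      rw [hnus]; rfl
    have hvj : isVertex A B j := by
      refine ⟨hj4, fun he => ?_⟩
      have hAj : nuSet A j = {p, q} := he.trans hnus
      exact A.not_edge_of_nuSet_eq hj4 hAj
        (A.edge_persist_down' (by omega) hjle (by simp only [Finset.mem_Icc]; omega)
          (by simp only [Finset.mem_Icc]; omega) hEA)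
    have hedgej : edgeFrom A B n j := ⟨hvn, hvj, by omega, Or.inl htype1⟩
    have hno2 : ∀ k, edgeFrom A B n k → type2 A B n k → False := by
      intro k hk ht2
      obtain ⟨hkM, hdisj⟩ := ht2
      have hM4 : 4 ≤ max p q := by rw [← hkM]; exact hk.2.1.1
      have hTMe : max (max p q) 3 = max p q := max_eq_left (by omega)
      rw [hTMe] at hE
      have hkey : ∃ x, x ∈ nuSet B (max p q) ∧ x ∈ nuSet A n := by
        rcases le_total q p with hle | hle
        · have hMp : max p q = p := max_eq_left hle
          rw [hMp] at hE hM4 ⊢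
          refine ⟨q, B.edge_new_only hM4 (by simp only [Finset.mem_Icc]; omega)
            (by omega) hE, ?_⟩
          simp [nuSet, hpdef, hqdef]
        · have hMq : max p q = q := max_eq_right hle
          rw [hMq] at hE hM4 ⊢
          refine ⟨p, B.edge_new_only hM4 (by simp only [Finset.mem_Icc]; omega)
            (by omega) (B.isEdge_symm hE), ?_⟩
          simp [nuSet, hpdef, hqdef]
      obtain ⟨x, hx1, hx2⟩ := hkey
      rw [hkM] at hdisj
      have : x ∈ nuSet B (max p q) ∩ nuSet A n := Finset.mem_inter.mpr ⟨hx1, hx2⟩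
      rw [hdisj] at this
      simp at this
    have huni : ∀ k, edgeFrom A B n k → k = j := by
      intro k hk
      rcases hk.2.2.2 with h1 | h2
      · have hk4 : 4 ≤ k := hk.2.1.1
        have hnk : nuSet B k = {p, q} := by rw [← h1]; rfl
        have hpk : p < k ∧ q < k := by
          have h1' := B.nu_lt_p k hk4
          have h2' := B.nu_lt_m k hk4
          have hnk2 := hnk
          rw [nuSet, GrowthHistory.pair_eq_iff] at hnk2
          rcases hnk2 with ⟨e1, e2⟩ | ⟨e1, e2⟩ <;> omega
        have hEk1 : isEdge B (k-1) p q := B.edge_of_nuSet_eq hk4 hnk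
        have hEknot : ¬ isEdge B k p q := B.not_edge_of_nuSet_eq hk4 hnk
        by_contra hne
        rcases lt_or_gt_of_ne hne with hlt | hgt
        · exact hEknot (B.edge_persist_down' (by omega) (by omega : k ≤ j-1)
            (by simp only [Finset.mem_Icc]; omega) (by simp only [Finset.mem_Icc]; omega) hEj1)
        · exact hjE (B.edge_persist_down' (by omega) (by omega : j ≤ k-1)
            (by simp only [Finset.mem_Icc]; omega) (by simp only [Finset.mem_Icc]; omega) hEk1)
      · exact (hno2 k hk h2).elim
    have hP : ∀ L, IsSegment B (n-1) p q L → ∀ x ∈ L, p < x ∧ q < x := by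
      obtain ⟨L1, L2, hAP⟩ := B.exists_arcPair (m := j) (by omega)
        (by simp only [Finset.mem_Icc]; omega) (by simp only [Finset.mem_Icc]; omega) hpq
      have hndf := B.arcPair_nodup_facts hAP
      have hnus' := hnus
      rw [nuSet, GrowthHistory.pair_eq_iff] at hnus'
      have hAPbig : ∃ L1' L2', GrowthHistory.ArcPair B j p q L1' L2' ∧
          ((∀ x ∈ L1', j ≤ x) ∨ (∀ x ∈ L2', j ≤ x)) := by
        rcases hnus' with ⟨e1, e2⟩ | ⟨e1, e2⟩
        · have hcb : List.Chain' (fun x y => B.next j x = y) (q :: ([j] ++ [p])) := by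
            simp only [List.singleton_append]
            rw [List.Chain', List.isChain_cons_cons, List.isChain_cons_cons]
            exact ⟨by rw [← e2]; exact B.step_new₁ j hj4,
                   by rw [← e1]; exact B.step_new₂ j hj4, List.isChain_singleton p⟩
          have hL2 : L2 = [j] := B.chain_unique L2 [j] q p hAP.2.1 hcb hndf.2.1
            (by simp; omega)
          refine ⟨L1, L2, hAP, Or.inr ?_⟩
          rw [hL2]; intro x hx; simp at hx; omega
        · have hcb : List.Chain' (fun x y => B.next j x = y) (p :: ([j] ++ [q])) := by
            simp only [List.singleton_append]
            rw [List.Chain', List.isChain_cons_cons, List.isChain_cons_cons]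
            exact ⟨by rw [← e2]; exact B.step_new₁ j hj4,
                   by rw [← e1]; exact B.step_new₂ j hj4, List.isChain_singleton q⟩
          have hL1 : L1 = [j] := B.chain_unique L1 [j] p q hAP.1 hcb hndf.2.2.1
            (by simp; omega)
          refine ⟨L1, L2, hAP, Or.inl ?_⟩
          rw [hL1]; intro x hx; simp at hx; omega
      obtain ⟨L1b, L2b, hAPb, hbigb⟩ := hAPbig
      obtain ⟨L1', L2', hAP', hs1, hs2, hq1', hq2'⟩ :=
        B.arcPair_iter (by omega) (show j ≤ n-1 by omega) hAPb
      have hbig' : (∀ x ∈ L1', j ≤ x) ∨ (∀ x ∈ L2', j ≤ x) := by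
        rcases hbigb with hb | hb
        · left; intro x hx
          rcases hq1' x hx with hx' | hx'
          · exact hb x hx'
          · omega
        · right; intro x hx
          rcases hq2' x hx with hx' | hx'
          · exact hb x hx'
          · omega
      exact GrowthHistory.seg_all_big B hAP' hbig' hj4 hpq (by omega) hpj hqj
    refine ⟨hvn, ⟨j, hedgej, huni⟩, fun _ k hk => ?_, fun hnP => absurd hP hnP⟩
    rw [huni k hk]; exact htype1
  · -- Case II : never an edge; type-2 edge at max p q
    have hM4 : 4 ≤ max p q := by
      by_contra hc
      apply hE
      have hMle : max p q ≤ 3 := by omega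
      rw [max_eq_right hMle]
      exact B.triangle_edge (by simp only [Finset.mem_Icc]; omega)
        (by simp only [Finset.mem_Icc]; omega) hpq
    have hTMe : max (max p q) 3 = max p q := max_eq_left (by omega)
    rw [hTMe] at hE
    have hdisj : nuSet B (max p q) ∩ nuSet A n = ∅ := by
      rw [Finset.eq_empty_iff_forall_notMem]
      intro x hx
      rw [Finset.mem_inter] at hx
      obtain ⟨hx1, hx2⟩ := hx
      have hxpq : x = p ∨ x = q := by
        simpa [nuSet, hpdef, hqdef] using hx2
      have hxe : isEdge B (max p q) (max p q) x := B.edge_new hM4 hx1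
      have hxlt : x < max p q := by
        rw [nuSet, Finset.mem_insert, Finset.mem_singleton] at hx1
        have h1' := B.nu_lt_p (max p q) hM4
        have h2' := B.nu_lt_m (max p q) hM4
        rcases hx1 with rfl | rfl <;> omega
      apply hE
      rcases le_total q p with hle | hle
      · have hMp : max p q = p := max_eq_left hle
        have hxq : x = q := by
          rcases hxpq with rfl | rfl
          · rw [hMp] at hxlt; omega
          · rfl
        rw [hMp]
        rw [hMp, hxq] at hxe
        exact hxe
      · have hMq : max p q = q := max_eq_right hle
        have hxp : x = p := by
          rcases hxpq with rfl | rfl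
          · rfl
          · rw [hMq] at hxlt; omega
        rw [hMq]
        rw [hMq, hxp] at hxe
        exact B.isEdge_symm hxe
    have hvM : isVertex A B (max p q) := by
      refine ⟨hM4, fun he => ?_⟩
      have hEAM : isEdge A (max p q) p q := A.edge_persist_down' (by omega) hMn
        (by simp only [Finset.mem_Icc]; omega) (by simp only [Finset.mem_Icc]; omega) hEA
      have hkey : ∃ x, x ∈ nuSet A (max p q) ∧ x ∈ nuSet A n := by
        rcases le_total q p with hle | hle
        · have hMp : max p q = p := max_eq_left hle
          rw [hMp] at hEAM hM4 ⊢
          refine ⟨q, A.edge_new_only hM4 (by simp only [Finset.mem_Icc]; omega)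
            (by omega) hEAM, ?_⟩
          simp [nuSet, hpdef, hqdef]
        · have hMq : max p q = q := max_eq_right hle
          rw [hMq] at hEAM hM4 ⊢
          refine ⟨p, A.edge_new_only hM4 (by simp only [Finset.mem_Icc]; omega)
            (by omega) (A.isEdge_symm hEAM), ?_⟩
          simp [nuSet, hpdef, hqdef]
      obtain ⟨x, hx1, hx2⟩ := hkey
      have hx1' : x ∈ nuSet B (max p q) := by rw [← he]; exact hx1
      have : x ∈ nuSet B (max p q) ∩ nuSet A n := Finset.mem_inter.mpr ⟨hx1', hx2⟩
      rw [hdisj] at this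
      simp at this
    have htype2 : type2 A B n (max p q) := ⟨rfl, hdisj⟩
    have hedgeM : edgeFrom A B n (max p q) := ⟨hvn, hvM, max_lt hpn hqn, Or.inr htype2⟩
    have hno1 : ∀ k, edgeFrom A B n k → type1 A B n k → False := by
      intro k hk h1
      have hk4 : 4 ≤ k := hk.2.1.1
      have hnk : nuSet B k = {p, q} := by rw [← h1]; rfl
      have hpk : p < k ∧ q < k := by
        have h1' := B.nu_lt_p k hk4
        have h2' := B.nu_lt_m k hk4
        have hnk2 := hnk
        rw [nuSet, GrowthHistory.pair_eq_iff] at hnk2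
        rcases hnk2 with ⟨e1, e2⟩ | ⟨e1, e2⟩ <;> omega
      have hMk : max p q < k := max_lt hpk.1 hpk.2
      have hEk1 : isEdge B (k-1) p q := B.edge_of_nuSet_eq hk4 hnk
      exact hE (B.edge_persist_down' (by omega) (by omega : max p q ≤ k - 1)
        (by simp only [Finset.mem_Icc]; omega) (by simp only [Finset.mem_Icc]; omega) hEk1)
    have huni : ∀ k, edgeFrom A B n k → k = max p q := by
      intro k hk
      rcases hk.2.2.2 with h1 | h2
      · exact (hno1 k hk h1).elim
      · exact h2.1
    have hnP : ¬ (∀ L, IsSegment B (n-1) p q L → ∀ x ∈ L, p < x ∧ q < x) := by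
      intro hPP
      obtain ⟨L1, L2, hAP⟩ := B.exists_arcPair (m := max p q) (by omega)
        (by simp only [Finset.mem_Icc]; omega) (by simp only [Finset.mem_Icc]; omega) hpq
      have hndf := B.arcPair_nodup_facts hAP
      have hL1ne : L1 ≠ [] := by
        intro e
        apply hE
        have hc := hAP.1
        rw [e] at hc
        simp only [List.nil_append] at hc
        exact Or.inl (by rw [List.Chain', List.isChain_pair] at hc; exact hc)
      have hL2ne : L2 ≠ [] := by
        intro e
        apply hE
        have hc := hAP.2.1
        rw [e] at hc
        simp only [List.nil_append] at hc
        exact Or.inr (by rw [List.Chain', List.isChain_pair] at hc; exact hc)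
      obtain ⟨hsl, hsu, hsp, hsq⟩ := GrowthHistory.sentinel_facts hpq
      have hsor : sentinel p q ∈ L1 ∨ sentinel p q ∈ L2 := by
        have := (B.arcPair_mem hAP (sentinel p q)).2
          (by simp only [Finset.mem_Icc]; omega)
        tauto
      obtain ⟨L1', L2', hAP', hs1, hs2, _, _⟩ := B.arcPair_iter (by omega) hMn hAP
      have hndf' := B.arcPair_nodup_facts hAP'
      rcases hsor with hside | hside
      · -- sentinel in L1 side; witness from L2
        obtain ⟨x0, hx0⟩ : ∃ x0, x0 ∈ L2 := ⟨L2.head hL2ne, List.head_mem hL2ne⟩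
        have hx0I := (B.arcPair_mem hAP x0).1 (by tauto)
        simp only [Finset.mem_Icc] at hx0I
        have hx0p : x0 ≠ p := fun e => hndf.2.1 (e ▸ hx0)
        have hx0q : x0 ≠ q := fun e => hndf.2.2.2.1 (e ▸ hx0)
        have hsL2' : sentinel p q ∉ L2' := fun hc =>
          hndf'.2.2.2.2.2 _ (hs1 _ hside) hc
        have hseg : IsSegment B (n-1) p q L2' :=
          ⟨Or.inr hAP'.2.1, hndf'.2.1, hndf'.2.2.2.1, hsL2'⟩
        have hgt := hPP L2' hseg x0 (hs2 x0 hx0)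
        rcases le_total q p with hle | hle
        · rw [max_eq_left hle] at hx0I; omega
        · rw [max_eq_right hle] at hx0I; omega
      · obtain ⟨x0, hx0⟩ : ∃ x0, x0 ∈ L1 := ⟨L1.head hL1ne, List.head_mem hL1ne⟩
        have hx0I := (B.arcPair_mem hAP x0).1 (by tauto)
        simp only [Finset.mem_Icc] at hx0I
        have hx0p : x0 ≠ p := fun e => hndf.1 (e ▸ hx0)
        have hx0q : x0 ≠ q := fun e => hndf.2.2.1 (e ▸ hx0)
        have hsL1' : sentinel p q ∉ L1' := fun hc =>
          hndf'.2.2.2.2.2 _ hc (hs2 _ hside)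
        have hseg : IsSegment B (n-1) p q L1' :=
          ⟨Or.inl hAP'.1, hndf'.1, hndf'.2.2.1, hsL1'⟩
        have hgt := hPP L1' hseg x0 (hs1 x0 hx0)
        rcases le_total q p with hle | hle
        · rw [max_eq_left hle] at hx0I; omega
        · rw [max_eq_right hle] at hx0I; omega
    exact ⟨hvn, ⟨max p q, hedgeM, huni⟩, fun hPP => absurd hPP hnP,
      fun _ k hk => (hk.2.2.2).resolve_left (fun h1 => hno1 k hk h1)⟩
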